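/- arXiv:1906.07075 — 3 statements merged into one kernel-verified Lean document; each statement's English description precedes it below -/
import Mathlib

section
/- Let ω : T → ℝ be integrable on the unit circle. Then for (Lebesgue) almost every λ ∈ ℝ, the function ζ ↦ ln|ω(ζ) − λ| belongs to L¹(T), and ln|ω(·) − λ − iε| converges to ln|ω(·) − λ| in L¹(T) as ε → 0. -/
open MeasureTheory Complex AddCircle Filter Set Metric Topology

/-! The `λ` whose level set `{ω = λ}` has positive measure form a countable, hence Lebesgue-null,
set. Since `|log|u|| ≤ |u| + 1_{(-1,1]}(u) |log u|`, the integral `∫_{-N}^{N} |log|x - λ|| dλ` grows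
at most linearly in `|x|`, so Fubini on `T × (-N, N)` gives integrability of `log|ω - λ|` for a.e.
`λ`. For such `λ` with null level set, `0 ≤ log|ω - λ - iε| - log|ω - λ| ≤ |ω - λ| + |ε| - log|ω - λ|`
is an integrable majorant, and dominated convergence gives the `L¹` convergence. -/

theorem ae_measure_level_set_eq_zero {α β : Type*} [MeasurableSpace α] [MeasurableSpace β]
    [MeasurableSingletonClass β] {μ : Measure α} [SFinite μ] {g : α → β}
    (hg : NullMeasurable g μ) (ν : Measure β) [NullSingletonClass ν] :
    ∀ᵐ t ∂ν, μ {a | g a = t} = 0 := by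
  have hnull := (Measure.countable_meas_level_set_pos₀ hg).measure_zero ν
  filter_upwards [measure_eq_zero_iff_ae_notMem.1 hnull] with t ht
  simpa using ht

namespace Real

theorem abs_log_le_abs_add_indicator (u : ℝ) :
    |log u| ≤ |u| + (Ioc (-1) 1).indicator (fun u => |log u|) u := by
  by_cases hu : u ∈ Ioc (-1) 1
  · simp [indicator_of_mem hu]
  · have h1 : 1 ≤ |u| := by
      contrapose! hu
      exact ⟨(abs_lt.1 hu).1, (abs_lt.1 hu).2.le⟩
    rw [indicator_of_notMem hu, add_zero, ← log_abs, abs_of_nonneg (log_nonneg h1)]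
    exact log_le_self (abs_nonneg u)

theorem integrable_indicator_abs_log :
    Integrable ((Ioc (-1) 1).indicator (fun u => |log u|)) := by
  refine (integrable_indicator_iff measurableSet_Ioc).2 ?_
  exact ((intervalIntegrable_iff_integrableOn_Ioc_of_le (by norm_num)).1
    intervalIntegral.intervalIntegrable_log').norm

end Real

theorem abs_log_abs_sub_le_of_mem_ball {x t N : ℝ} (ht : t ∈ ball 0 N) :
    |Real.log (|x - t|)| ≤ (|x| + N) + (Ioc (-1) 1).indicator (fun u => |Real.log u|) (x - t) := by
  have hxt : |x - t| ≤ |x| + N := (abs_sub x t).trans (by simpa using (mem_ball_zero_iff.1 ht).le)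
  rw [Real.log_abs]
  linarith [Real.abs_log_le_abs_add_indicator (x - t)]

theorem integrableOn_abs_log_abs_sub_bound (x N : ℝ) :
    IntegrableOn (fun t => (|x| + N) + (Ioc (-1) 1).indicator (fun u => |Real.log u|) (x - t))
      (ball 0 N) :=
  (integrableOn_const measure_ball_lt_top.ne).add
    (Real.integrable_indicator_abs_log.comp_sub_left x).integrableOn

theorem integrableOn_log_abs_sub_ball (x N : ℝ) :
    IntegrableOn (fun t => Real.log |x - t|) (ball 0 N) :=
  (integrableOn_abs_log_abs_sub_bound x N).mono'
    (Real.measurable_log.comp (measurable_const.sub measurable_id).abs).aestronglyMeasurable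
    (ae_restrict_of_forall_mem measurableSet_ball fun _ ht =>
      (Real.norm_eq_abs _).trans_le (abs_log_abs_sub_le_of_mem_ball ht))

theorem integral_abs_log_abs_sub_le (x N : ℝ) :
    ∫ t in ball 0 N, |Real.log (|x - t|)| ≤ volume.real (ball (0 : ℝ) N) * (|x| + N)
      + ∫ u, (Ioc (-1) 1).indicator (fun u => |Real.log u|) u := by
  set φ := (Ioc (-1) 1).indicator (fun u => |Real.log u|)
  have hφ : Integrable (fun t => φ (x - t)) := Real.integrable_indicator_abs_log.comp_sub_left x
  calc ∫ t in ball 0 N, |Real.log (|x - t|)|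
      ≤ ∫ t in ball 0 N, ((|x| + N) + φ (x - t)) :=
        integral_mono_of_nonneg (ae_of_all _ fun _ => abs_nonneg _)
          (integrableOn_abs_log_abs_sub_bound x N)
          (ae_restrict_of_forall_mem measurableSet_ball fun _ => abs_log_abs_sub_le_of_mem_ball)
    _ = volume.real (ball (0 : ℝ) N) * (|x| + N) + ∫ t in ball 0 N, φ (x - t) := by
        rw [integral_add (f := fun _ => |x| + N) (integrableOn_const measure_ball_lt_top.ne)
          hφ.integrableOn, setIntegral_const, smul_eq_mul]
    _ ≤ volume.real (ball (0 : ℝ) N) * (|x| + N) + ∫ t, φ (x - t) := by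
        gcongr
        · exact ae_of_all _ fun _ => indicator_nonneg (fun _ _ => abs_nonneg _) _
        · exact Measure.restrict_le_self
    _ = volume.real (ball (0 : ℝ) N) * (|x| + N) + ∫ u, φ u := by
        rw [integral_sub_left_eq_self]

theorem ae_integrable_log_abs_sub {α : Type*} [MeasurableSpace α] {μ : Measure α}
    [IsFiniteMeasure μ] {g : α → ℝ} (hg : Integrable g μ) :
    ∀ᵐ t ∂volume, Integrable (fun a => Real.log |g a - t|) μ := by
  rw [← Measure.restrict_univ (μ := volume), ← iUnion_ball_nat 0, ae_restrict_iUnion_iff]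
  intro N
  set ν := volume.restrict (ball (0 : ℝ) N)
  set C := ∫ u, (Ioc (-1) 1).indicator (fun u => |Real.log u|) u
  have hmeas : AEStronglyMeasurable (fun p : α × ℝ => Real.log |g p.1 - p.2|) (μ.prod ν) := by
    have hg₁ : AEMeasurable (fun p : α × ℝ => g p.1) (μ.prod ν) := hg.aemeasurable.comp_fst
    exact (Real.measurable_log.comp_aemeasurable
      (hg₁.sub measurable_snd.aemeasurable).abs).aestronglyMeasurable
  refine Integrable.prod_left_ae ((integrable_prod_iff hmeas).2 ⟨ae_of_all _ fun a => ?_, ?_⟩)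
  · exact integrableOn_log_abs_sub_ball (g a) N
  · refine Integrable.mono' (((hg.abs.add (integrable_const (N : ℝ))).const_mul
      (volume.real (ball (0 : ℝ) N))).add (integrable_const C)) hmeas.norm.integral_prod_right'
      (ae_of_all _ fun a => ?_)
    rw [Real.norm_of_nonneg (integral_nonneg fun _ => norm_nonneg _)]
    simp only [Real.norm_eq_abs, Pi.add_apply]
    exact integral_abs_log_abs_sub_le (g a) N

theorem log_abs_sub_le_log_norm_sub_mul_I {x lam : ℝ} (h : x ≠ lam) (ε : ℝ) :
    Real.log |x - lam| ≤ Real.log ‖(x : ℂ) - lam - ε * I‖ := by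
  refine Real.log_le_log (abs_pos.2 (sub_ne_zero.2 h)) ?_
  simpa using Complex.abs_re_le_norm ((x : ℂ) - lam - ε * I)

theorem log_norm_sub_mul_I_le (x lam ε : ℝ) :
    Real.log ‖(x : ℂ) - lam - ε * I‖ ≤ |x - lam| + |ε| :=
  (Real.log_le_self (norm_nonneg _)).trans <| (norm_sub_le _ _).trans_eq <| by
    rw [← ofReal_sub, norm_real, norm_mul, norm_I, mul_one, norm_real, Real.norm_eq_abs,
      Real.norm_eq_abs]

theorem abs_log_norm_sub_mul_I_sub_log_abs_le {x lam : ℝ} (h : x ≠ lam) (ε : ℝ) :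
    |Real.log ‖(x : ℂ) - lam - ε * I‖ - Real.log (|x - lam|)|
      ≤ |x - lam| + |ε| - Real.log |x - lam| := by
  rw [abs_of_nonneg (sub_nonneg.2 (log_abs_sub_le_log_norm_sub_mul_I h ε))]
  linarith [log_norm_sub_mul_I_le x lam ε]

theorem tendsto_abs_log_norm_sub_mul_I_sub_log_abs {x lam : ℝ} (h : x ≠ lam) :
    Tendsto (fun ε : ℝ => |Real.log ‖(x : ℂ) - lam - ε * I‖ - Real.log (|x - lam|)|)
      (𝓝 0) (𝓝 0) := by
  have hcont : Continuous fun ε : ℝ => ‖(x : ℂ) - lam - ε * I‖ := by fun_prop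
  have hlim := ((hcont.tendsto 0).log ?_).sub_const (Real.log |x - lam|) |>.abs
  · simpa [← ofReal_sub] using hlim
  · simpa [← ofReal_sub] using sub_ne_zero.2 h

theorem tendsto_integral_abs_log_norm_sub_mul_I_sub_log_abs {α : Type*} [MeasurableSpace α]
    {μ : Measure α} [IsFiniteMeasure μ] {g : α → ℝ} (hg : Integrable g μ) {lam : ℝ}
    (hfib : μ {a | g a = lam} = 0) (hlog : Integrable (fun a => Real.log |g a - lam|) μ) :
    Tendsto (fun ε : ℝ =>
        ∫ a, |Real.log ‖(g a : ℂ) - lam - ε * I‖ - Real.log (|g a - lam|)| ∂μ) (𝓝 0) (𝓝 0) := by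
  have hne : ∀ᵐ a ∂μ, g a ≠ lam := measure_eq_zero_iff_ae_notMem.1 hfib
  have hsmall : ∀ᶠ ε : ℝ in 𝓝 0, |ε| ≤ 1 := by
    filter_upwards [closedBall_mem_nhds (0 : ℝ) one_pos] with ε hε
    simpa using hε
  have hdom := tendsto_integral_filter_of_dominated_convergence
    (fun a => |g a - lam| + 1 - Real.log |g a - lam|) ?_ ?_
    (((hg.sub (integrable_const lam)).abs.add (integrable_const 1)).sub hlog)
    (hne.mono fun a ha => tendsto_abs_log_norm_sub_mul_I_sub_log_abs ha)
  · simpa using hdom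
  · refine Eventually.of_forall fun ε => ?_
    have hg_meas := hg.aemeasurable
    fun_prop
  · filter_upwards [hsmall] with ε hε
    filter_upwards [hne] with a ha
    rw [Real.norm_of_nonneg (abs_nonneg _)]
    linarith [abs_log_norm_sub_mul_I_sub_log_abs_le ha ε]

/-- For an integrable real symbol `ω` on the unit circle, for almost every `λ ∈ ℝ` the
function `ζ ↦ ln|ω(ζ) - λ|` is integrable on the circle, and
`ln|ω(·) - λ - iε| → ln|ω(·) - λ|` in `L¹(T)` as `ε → 0`. -/
theorem log_integrable_ae [Fact (0 < 2 * Real.pi)]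
    (ω : AddCircle (2 * Real.pi) → ℝ) (hω : Integrable ω haarAddCircle) :
    ∀ᵐ lam ∂(volume : Measure ℝ),
      Integrable (fun ζ => Real.log |ω ζ - lam|) haarAddCircle ∧
      Tendsto (fun ε : ℝ =>
          ∫ ζ, |Real.log ‖(ω ζ : ℂ) - lam - ε * Complex.I‖
                - Real.log (|ω ζ - lam| : ℝ)| ∂haarAddCircle)
        (nhdsWithin 0 {(0 : ℝ)}ᶜ) (nhds 0) := by
  filter_upwards [ae_measure_level_set_eq_zero hω.aemeasurable.nullMeasurable volume,
    ae_integrable_log_abs_sub hω] with lam hfib hlog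
  exact ⟨hlog, (tendsto_integral_abs_log_norm_sub_mul_I_sub_log_abs hω hfib hlog).mono_left
    nhdsWithin_le_nhds⟩
end

section
/- For 0 < a < b < 2π and any z in the open unit disk, ∫_a^b (e^{iθ} + z)/(e^{iθ} − z) dθ = (b − a) + 2i · Log((1 − z e^{−ia})/(1 − z e^{−ib})), where Log denotes the principal branch of the logarithm (more precisely, any branch continuous on the disk with value 0 at z = 0). -/
open Complex Real

/-! The integrand `(e^{iθ} + z)/(e^{iθ} - z)` has the explicit primitive
`θ - 2i·Log(1 - z e^{-iθ})`: indeed `1 - 2i · (i z e^{-iθ})/(1 - z e^{-iθ}) = 1 + 2z/(e^{iθ} - z)`.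
For `‖z‖ < 1` the argument of the logarithm stays in the right half-plane, so the primitive is
differentiable everywhere and, since both arguments lie in `(-π/2, π/2)`, the difference of the
two logarithms is the logarithm of the quotient. -/

namespace Complex

lemma re_one_sub_pos_of_norm_lt_one {w : ℂ} (hw : ‖w‖ < 1) : 0 < (1 - w).re := by
  have := re_le_norm w
  simp only [sub_re, one_re]
  linarith

lemma log_div_of_re_pos {u v : ℂ} (hu : 0 < u.re) (hv : 0 < v.re) :
    log (u / v) = log u - log v := by
  have hu' := abs_lt.mp (abs_arg_lt_pi_div_two_iff.mpr (Or.inl hu))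
  have hv' := abs_lt.mp (abs_arg_lt_pi_div_two_iff.mpr (Or.inl hv))
  have hu0 : u ≠ 0 := fun h => by simp [h] at hu
  have hv0 : v ≠ 0 := fun h => by simp [h] at hv
  rw [← log_exp (x := log u - log v), exp_sub, exp_log hu0, exp_log hv0] <;>
    simp only [sub_im, log_im] <;> linarith

lemma hasDerivAt_sub_two_I_mul_log_one_sub_mul_exp (z : ℂ) {θ : ℝ}
    (hθ : 1 - z * exp (-θ * I) ∈ slitPlane) :
    HasDerivAt (fun t : ℝ => (t : ℂ) - 2 * I * log (1 - z * exp (-t * I)))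
      ((exp (θ * I) + z) / (exp (θ * I) - z)) θ := by
  have hexp : HasDerivAt (fun t : ℝ => exp (-t * I)) (-I * exp (-θ * I)) θ := by
    have := ((hasDerivAt_id (θ : ℂ)).neg.mul_const I).cexp.comp_ofReal
    simpa [mul_comm] using this
  have hlog := ((hexp.const_mul z).const_sub 1).clog_real hθ
  refine ((hasDerivAt_id θ).ofReal_comp.sub (hlog.const_mul (2 * I))).congr_deriv ?_
  have hfac : 1 - z * exp (-θ * I) = exp (-θ * I) * (exp (θ * I) - z) := by
    rw [mul_sub, ← exp_add, neg_mul, neg_add_cancel, exp_zero, mul_comm]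
  have hg : exp (θ * I) - z ≠ 0 := right_ne_zero_of_mul (hfac ▸ slitPlane_ne_zero hθ)
  rw [hfac, ofReal_one]
  field_simp
  rw [I_sq, mul_comm I]
  field_simp
  ring

end Complex

theorem schwarz_integral_arc_general (a b : ℝ)
    (z : ℂ) (hz : ‖z‖ < 1) :
    (∫ θ : ℝ in a..b,
        (Complex.exp (θ * Complex.I) + z) / (Complex.exp (θ * Complex.I) - z))
      = ((b : ℂ) - a) + 2 * Complex.I *
          Complex.log ((1 - z * Complex.exp (-(a : ℂ) * Complex.I)) /
            (1 - z * Complex.exp (-(b : ℂ) * Complex.I))) := by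
  have hre : ∀ θ : ℝ, 0 < (1 - z * exp (-θ * I)).re := fun θ =>
    re_one_sub_pos_of_norm_lt_one <| by
      rwa [norm_mul, ← ofReal_neg, norm_exp_ofReal_mul_I, mul_one]
  have hne : ∀ θ : ℝ, exp (θ * I) - z ≠ 0 := fun θ =>
    sub_ne_zero.mpr fun h => by simp [← h, norm_exp_ofReal_mul_I] at hz
  rw [intervalIntegral.integral_eq_sub_of_hasDerivAt
      (fun θ _ => hasDerivAt_sub_two_I_mul_log_one_sub_mul_exp z (Or.inl (hre θ)))
      (ContinuousOn.intervalIntegrable (by fun_prop (disch := exact fun θ _ => hne θ))),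
    log_div_of_re_pos (hre a) (hre b)]
  ring

/-- For `0 < a < b < 2π` and `z` in the open unit disk,
`∫_a^b (e^{iθ} + z)/(e^{iθ} - z) dθ = (b - a) + 2i·Log((1 - z e^{-ia})/(1 - z e^{-ib}))`. -/
theorem schwarz_integral_arc (a b : ℝ) (ha : 0 < a) (hab : a < b) (hb : b < 2 * π)
    (z : ℂ) (hz : ‖z‖ < 1) :
    (∫ θ : ℝ in a..b,
        (Complex.exp (θ * Complex.I) + z) / (Complex.exp (θ * Complex.I) - z))
      = ((b : ℂ) - a) + 2 * Complex.I *
          Complex.log ((1 - z * Complex.exp (-(a : ℂ) * Complex.I)) /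
            (1 - z * Complex.exp (-(b : ℂ) * Complex.I))) :=
  schwarz_integral_arc_general a b z hz
end

section
/- Let Γ = (α, β) be an open arc of the unit circle with normalized length m(Γ), and let ζ be a point of the unit circle not in the open arc (α, β). Then e^{−πi·m(Γ)} · (1 − ζ·conj(α)) / (1 − ζ·conj(β)) = |ζ − α| / |ζ − β|; in particular this quantity is real and positive. -/
/-!
With `ζ·conj α = e^{i(c-a)}` and `ζ·conj β = e^{i(c-b)}`, the half-angle factorization
`1 - e^{iθ} = -2i·sin(θ/2)·e^{iθ/2}` turns the quotient into `e^{i(b-a)/2}` times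
`sin((c-a)/2) / sin((c-b)/2)`, and the prefactor `e^{-πi·m(Γ)}` cancels that phase. Since `ζ`
lies outside the arc, both half-angles are in `[0, π]`, so the sines are nonnegative and equal
half the chord lengths `|ζ - α|` and `|ζ - β|`.
-/

open Complex Real

namespace Complex

lemma exp_ofReal_mul_I_mul_conj (x y : ℝ) :
    exp (x * I) * (starRingEnd ℂ) (exp (y * I)) = exp (↑(x - y) * I) := by
  rw [← exp_conj, ← exp_add, map_mul, conj_ofReal, conj_I]
  push_cast
  ring_nf

lemma norm_exp_ofReal_mul_I_sub_exp (x y : ℝ) :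
    ‖exp (x * I) - exp (y * I)‖ = 2 * |Real.sin ((x - y) / 2)| := by
  have h : exp (x * I) - exp (y * I) = exp (y * I) * (exp (I * ↑(x - y)) - 1) := by
    rw [mul_sub, mul_one, ← exp_add]
    push_cast
    ring_nf
  rw [h, norm_mul, norm_exp_ofReal_mul_I, one_mul, norm_exp_I_mul_ofReal_sub_one, norm_mul,
    Real.norm_two, Real.norm_eq_abs]

lemma one_sub_exp_ofReal_mul_I (θ : ℝ) :
    1 - exp (θ * I) = -2 * I * Real.sin (θ / 2) * exp (↑(θ / 2) * I) := by
  have hsin := two_sin (θ / 2 : ℂ)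
  have hinv : exp (-(θ / 2 : ℂ) * I) * exp ((θ / 2 : ℂ) * I) = 1 := by
    rw [← exp_add, neg_mul, neg_add_cancel, exp_zero]
  have hsq : exp ((θ / 2 : ℂ) * I) * exp ((θ / 2 : ℂ) * I) = exp (θ * I) := by
    rw [← exp_add]
    ring_nf
  push_cast
  linear_combination (I * exp ((θ / 2 : ℂ) * I)) * hsin - hinv + hsq +
    (exp ((θ / 2 : ℂ) * I) * exp (-(θ / 2 : ℂ) * I) - exp ((θ / 2 : ℂ) * I) ^ 2) * I_sq

lemma one_sub_exp_ofReal_mul_I_div {θ₁ θ₂ : ℝ} (h : Real.sin (θ₂ / 2) ≠ 0) :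
    (1 - exp (θ₁ * I)) / (1 - exp (θ₂ * I)) =
      exp (↑((θ₁ - θ₂) / 2) * I) * ↑(Real.sin (θ₁ / 2) / Real.sin (θ₂ / 2)) := by
  have hexp : exp (↑((θ₁ - θ₂) / 2) * I) * exp (↑(θ₂ / 2) * I) = exp (↑(θ₁ / 2) * I) := by
    rw [← exp_add]
    push_cast
    ring_nf
  have hsin : (Real.sin (θ₂ / 2) : ℂ) ≠ 0 := ofReal_ne_zero.mpr h
  have hden : -2 * I * Real.sin (θ₂ / 2) * exp (↑(θ₂ / 2) * I) ≠ 0 :=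
    mul_ne_zero (mul_ne_zero (mul_ne_zero (by norm_num) I_ne_zero) hsin) (exp_ne_zero _)
  rw [one_sub_exp_ofReal_mul_I, one_sub_exp_ofReal_mul_I, div_eq_iff hden, ← hexp,
    ofReal_div (Real.sin _)]
  field_simp

end Complex

theorem arc_ratio_identity_general (a b c : ℝ) (hab : a < b)
    (hbc : b < c) (hc : c ≤ a + 2 * π) :
    Complex.exp (-(π : ℂ) * Complex.I * (((b - a) / (2 * π) : ℝ) : ℂ)) *
        (1 - Complex.exp ((c : ℂ) * Complex.I) *
          (starRingEnd ℂ) (Complex.exp ((a : ℂ) * Complex.I))) /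
        (1 - Complex.exp ((c : ℂ) * Complex.I) *
          (starRingEnd ℂ) (Complex.exp ((b : ℂ) * Complex.I)))
      = ((‖Complex.exp ((c : ℂ) * Complex.I) - Complex.exp ((a : ℂ) * Complex.I)‖
          / ‖Complex.exp ((c : ℂ) * Complex.I) - Complex.exp ((b : ℂ) * Complex.I)‖ : ℝ) : ℂ) := by
  have hsin_a : 0 ≤ Real.sin ((c - a) / 2) :=
    Real.sin_nonneg_of_nonneg_of_le_pi (by linarith) (by linarith)
  have hsin_b : 0 < Real.sin ((c - b) / 2) :=
    Real.sin_pos_of_pos_of_lt_pi (by linarith) (by linarith)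
  have hphase : -(π : ℂ) * I * (((b - a) / (2 * π) : ℝ) : ℂ) =
      -(↑(((c - a) - (c - b)) / 2) * I) := by
    push_cast
    field_simp [ofReal_ne_zero.mpr pi_ne_zero]
    ring
  rw [exp_ofReal_mul_I_mul_conj, exp_ofReal_mul_I_mul_conj, mul_div_assoc,
    one_sub_exp_ofReal_mul_I_div hsin_b.ne', ← mul_assoc, hphase, ← Complex.exp_add,
    neg_add_cancel, Complex.exp_zero, one_mul, norm_exp_ofReal_mul_I_sub_exp,
    norm_exp_ofReal_mul_I_sub_exp, abs_of_nonneg hsin_a, abs_of_pos hsin_b,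
    mul_div_mul_left _ _ two_ne_zero]

/-- For an arc `Γ = (α, β)` of the unit circle (`α = e^{ia}`, `β = e^{ib}`,
`0 ≤ a < b < a + 2π`, `m(Γ) = (b - a)/(2π)`) and a point `ζ = e^{ic}` of the circle not
in the open arc (`b < c ≤ a + 2π`, so in particular `ζ ≠ β`),
`e^{-πi·m(Γ)}·(1 - ζ·conj(α))/(1 - ζ·conj(β)) = |ζ - α|/|ζ - β|`;
in particular this quantity is real and nonnegative. -/
theorem arc_ratio_identity (a b c : ℝ) (ha : 0 ≤ a) (hab : a < b) (hb : b < a + 2 * π)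
    (hbc : b < c) (hc : c ≤ a + 2 * π) :
    Complex.exp (-(π : ℂ) * Complex.I * (((b - a) / (2 * π) : ℝ) : ℂ)) *
        (1 - Complex.exp ((c : ℂ) * Complex.I) *
          (starRingEnd ℂ) (Complex.exp ((a : ℂ) * Complex.I))) /
        (1 - Complex.exp ((c : ℂ) * Complex.I) *
          (starRingEnd ℂ) (Complex.exp ((b : ℂ) * Complex.I)))
      = ((‖Complex.exp ((c : ℂ) * Complex.I) - Complex.exp ((a : ℂ) * Complex.I)‖
          / ‖Complex.exp ((c : ℂ) * Complex.I) - Complex.exp ((b : ℂ) * Complex.I)‖ : ℝ) : ℂ) :=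
  arc_ratio_identity_general a b c hab hbc hc
end
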